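/- arXiv:2006.05607 — 5 statements merged into one kernel-verified Lean document; each statement's English description precedes it below -/
import Mathlib

section
/- Let k ≥ 2 be an integer and Q = T[H_1, ..., H_t] a digraph composition. Then Q has a k-king if and only if T has a k-king u_i for some i ∈ [t] and at least one of the following holds: (i) H_i has a k-king; (ii) |V(H_i)| ≥ 2 and u_i belongs to a directed cycle of T of length at most k. -/
/-- There is a directed walk (equivalently, path) of length at most `k` from `x` to `y`. -/
def KReach {V : Type*} (A : V → V → Prop) (k : ℕ) (x y : V) : Prop :=
  ∃ n : ℕ, n ≤ k ∧ ∃ f : ℕ → V, f 0 = x ∧ f n = y ∧ ∀ i < n, A (f i) (f (i + 1))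

/-- `x` is a `k`-king: it reaches every vertex by a path of length at most `k`. -/
def IsKKing {V : Type*} (A : V → V → Prop) (k : ℕ) (x : V) : Prop :=
  ∀ y : V, KReach A k x y

/-- A strict `k`-king: a `k`-king with some vertex at distance exactly `k`. -/
def IsStrictKKing {V : Type*} (A : V → V → Prop) (k : ℕ) (x : V) : Prop :=
  IsKKing A k x ∧ ∃ y : V, ¬ KReach A (k - 1) x y

/-- Strong connectivity of a digraph. -/
def Strong {V : Type*} (A : V → V → Prop) : Prop :=
  ∀ x y : V, ∃ k : ℕ, KReach A k x y

/-- Semicomplete digraph: at least one arc between any two distinct vertices. -/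
def Semicomplete {V : Type*} (A : V → V → Prop) : Prop :=
  ∀ x y : V, x ≠ y → A x y ∨ A y x

/-- Tournament: exactly one arc between any two distinct vertices, no loops. -/
def IsTournament {V : Type*} (A : V → V → Prop) : Prop :=
  Irreflexive A ∧ ∀ x y : V, x ≠ y → (A x y ↔ ¬ A y x)

/-- Out-degree of a vertex. -/
noncomputable def outDeg {V : Type*} (A : V → V → Prop) (x : V) : ℕ :=
  Set.ncard {y | A x y}

/-- There is a directed cycle of length exactly `k` through `x`. -/
def CycleThrough {V : Type*} (A : V → V → Prop) (k : ℕ) (x : V) : Prop :=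
  ∃ f : ℕ → V, f 0 = x ∧ f k = x ∧ (∀ i < k, A (f i) (f (i + 1))) ∧
    ∀ i j, i < k → j < k → f i = f j → i = j

/-- `x` belongs to a directed cycle of length at most `k`. -/
def OnShortCycle {V : Type*} (A : V → V → Prop) (k : ℕ) (x : V) : Prop :=
  ∃ n : ℕ, 2 ≤ n ∧ n ≤ k ∧ CycleThrough A n x

/-- `AQ` (on `W`) is the composition `T[H_1, …, H_t]` of digraphs over the digraph `AT`
(on index type `ι`), where the fiber of `π` over `i` is the vertex set of `H_i`
(each fiber is nonempty since `π` is surjective), the arcs of `H_i` are the arcs of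
`AQ` inside the fiber over `i`, and arcs between different fibers are determined by `AT`. -/
structure IsComposition {ι W : Type*} (AT : ι → ι → Prop) (AQ : W → W → Prop)
    (π : W → ι) : Prop where
  surj : Function.Surjective π
  cross : ∀ x y : W, π x ≠ π y → (AQ x y ↔ AT (π x) (π y))

/-- The digraph `H_i`: the induced subdigraph on the fiber of `π` over `i`. -/
def FiberArc {ι W : Type*} (AQ : W → W → Prop) (π : W → ι) (i : ι) :
    {w : W // π w = i} → {w : W // π w = i} → Prop :=
  fun a b => AQ a.1 b.1

/-- The induced subdigraph on the vertices satisfying `P`. -/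
def DelArc {V : Type*} (A : V → V → Prop) (P : V → Prop) :
    {v : V // P v} → {v : V // P v} → Prop :=
  fun a b => A a.1 b.1

/-- `{v}` is a `k`-absorbent set: every other vertex reaches `v` in at most `k` steps. -/
def SingletonAbsorbent {V : Type*} (A : V → V → Prop) (k : ℕ) (v : V) : Prop :=
  ∀ x : V, x ≠ v → KReach A k x v

/-- A quasi-kernel: an independent set `K` such that every vertex outside `K`
reaches some vertex of `K` by a path of length at most 2. -/
def QuasiKernel {V : Type*} (A : V → V → Prop) (K : Set V) : Prop :=
  (∀ x ∈ K, ∀ y ∈ K, x ≠ y → ¬ A x y) ∧ ∀ x ∉ K, ∃ y ∈ K, KReach A 2 x y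

/-- A `k`-kernel: a `k`-independent and `(k-1)`-absorbent set. -/
def KKernel {V : Type*} (A : V → V → Prop) (k : ℕ) (K : Set V) : Prop :=
  (∀ x ∈ K, ∀ y ∈ K, x ≠ y → ¬ KReach A (k - 1) x y) ∧
    ∀ x ∉ K, ∃ y ∈ K, KReach A (k - 1) x y

/-!
Projecting a walk of `Q = T[H_1, …, H_t]` to `T` keeps the arcs between different fibers and
contracts the arcs inside a fiber. Hence a `k`-king `v` of `Q` projects to a `k`-king of `T`, and
if `v` is not a `k`-king of its own fiber `H_i`, some vertex of `H_i` is reached from `v` only by a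
walk leaving `H_i`; its projection is a closed walk through `u_i` of positive length at most `k`,
which contains a short cycle. Conversely, since all arcs between adjacent fibers are present, every
walk of positive length in `T` lifts to `Q` with arbitrary endpoints in the prescribed fibers: this
reaches the other fibers from any vertex of `H_i`, and a short cycle through `u_i` reaches `H_i`
itself.
-/

/-- `KReach A k x y` unfolds to `∃ n ≤ k, HasWalk A n x y`. -/
def HasWalk {V : Type*} (A : V → V → Prop) (n : ℕ) (x y : V) : Prop :=
  ∃ f : ℕ → V, f 0 = x ∧ f n = y ∧ ∀ i < n, A (f i) (f (i + 1))

namespace HasWalk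

variable {V V' : Type*} {A : V → V → Prop} {B : V' → V' → Prop} {m n : ℕ} {x y z : V}

theorem zero_iff : HasWalk A 0 x y ↔ x = y :=
  ⟨fun ⟨_, h0, hn, _⟩ => h0.symm.trans hn, fun h => ⟨fun _ => x, rfl, h, by simp⟩⟩

theorem succ_iff : HasWalk A (n + 1) x z ↔ ∃ y, HasWalk A n x y ∧ A y z := by
  constructor
  · rintro ⟨f, h0, hn, hf⟩
    exact ⟨f n, ⟨f, h0, rfl, fun i hi => hf i (by omega)⟩, hn ▸ hf n n.lt_succ_self⟩
  · rintro ⟨y, ⟨f, h0, hn, hf⟩, hyz⟩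
    refine ⟨fun i => if i ≤ n then f i else z, by simpa using h0, by simp, fun i hi => ?_⟩
    rcases Nat.lt_succ_iff_lt_or_eq.mp hi with hi | rfl
    · simpa [hi.le, Nat.succ_le_of_lt hi] using hf i hi
    · simpa [hn] using hyz

theorem single (h : A x y) : HasWalk A 1 x y :=
  succ_iff.mpr ⟨x, zero_iff.mpr rfl, h⟩

theorem append (h₁ : HasWalk A m x y) (h₂ : HasWalk A n y z) : HasWalk A (m + n) x z := by
  induction n generalizing z with
  | zero => rwa [← zero_iff.mp h₂]
  | succ n ih =>
    obtain ⟨w, hyw, hwz⟩ := succ_iff.mp h₂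
    exact succ_iff.mpr ⟨w, ih hyw, hwz⟩

theorem of_seq {f : ℕ → V} (hf : ∀ i < n, A (f i) (f (i + 1))) {a b : ℕ} (hab : a ≤ b)
    (hb : b ≤ n) : HasWalk A (b - a) (f a) (f b) :=
  ⟨fun i => f (a + i), rfl, by simp only [Nat.add_sub_cancel' hab],
    fun i hi => by simpa only [← add_assoc] using hf (a + i) (by omega)⟩

theorem map {f : V → V'} (hf : ∀ x y, A x y → B (f x) (f y)) :
    HasWalk A n x y → HasWalk B n (f x) (f y) :=
  fun ⟨g, h0, hn, hg⟩ => ⟨f ∘ g, by simp [h0], by simp [hn], fun i hi => hf _ _ (hg i hi)⟩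

theorem fiber_or_map {f : V → V'} (hf : ∀ x y, A x y → f x = f y ∨ B (f x) (f y))
    (h : HasWalk A n x y) :
    (∃ hy : f y = f x, HasWalk (FiberArc A f (f x)) n ⟨x, rfl⟩ ⟨y, hy⟩) ∨
      ∃ m, 0 < m ∧ m ≤ n ∧ HasWalk B m (f x) (f y) := by
  induction n generalizing y with
  | zero =>
    obtain rfl := zero_iff.mp h
    exact Or.inl ⟨rfl, zero_iff.mpr rfl⟩
  | succ n ih =>
    obtain ⟨z, hxz, hzy⟩ := succ_iff.mp h
    rcases ih hxz with ⟨hz, hw⟩ | ⟨m, hm, hmn, hw⟩ <;> rcases hf z y hzy with e | hB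
    · exact Or.inl ⟨e.symm.trans hz, succ_iff.mpr ⟨⟨z, hz⟩, hw, hzy⟩⟩
    · exact Or.inr ⟨1, one_pos, by omega, single (hz ▸ hB)⟩
    · exact Or.inr ⟨m, hm, by omega, e ▸ hw⟩
    · exact Or.inr ⟨m + 1, by omega, by omega, succ_iff.mpr ⟨f z, hw, hB⟩⟩

theorem exists_map_le {f : V → V'} (hf : ∀ x y, A x y → f x = f y ∨ B (f x) (f y))
    (h : HasWalk A n x y) : ∃ m ≤ n, HasWalk B m (f x) (f y) := by
  rcases h.fiber_or_map hf with ⟨hy, -⟩ | ⟨m, -, hmn, hw⟩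
  · exact ⟨0, n.zero_le, zero_iff.mpr hy.symm⟩
  · exact ⟨m, hmn, hw⟩

/-- A shortest closed walk of positive length through `x` is a cycle: a repeated vertex would
cut out a shorter one. -/
theorem onShortCycle (hA : Irreflexive A) (hn : 0 < n) {k : ℕ} (hnk : n ≤ k)
    (h : HasWalk A n x x) : OnShortCycle A k x := by
  classical
  have hex : ∃ m, 0 < m ∧ HasWalk A m x x := ⟨n, hn, h⟩
  obtain ⟨hm, f, hf0, hfm, hf⟩ := Nat.find_spec hex
  set m := Nat.find hex
  have hm2 : 2 ≤ m := by
    by_contra hlt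
    have h1 : m = 1 := by omega
    rw [h1] at hfm hf
    exact hA x (by simpa [hf0, hfm] using hf 0 one_pos)
  refine ⟨m, hm2, (Nat.find_min' hex ⟨hn, h⟩).trans hnk, f, hf0, hfm, hf, ?_⟩
  intro i j hi hj hij
  by_contra hne
  wlog hlt : i < j generalizing i j
  · exact this j i hj hi hij.symm (Ne.symm hne) (by omega)
  have hpre := of_seq hf i.zero_le hi.le
  have hsuf := of_seq hf hj.le le_rfl
  rw [hf0, Nat.sub_zero] at hpre
  rw [hfm, ← hij] at hsuf
  exact Nat.find_min hex (by omega : i + (m - j) < m) ⟨by omega, hpre.append hsuf⟩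

end HasWalk

theorem kReach_refl {V : Type*} (A : V → V → Prop) (k : ℕ) (x : V) : KReach A k x x :=
  ⟨0, k.zero_le, HasWalk.zero_iff.mpr rfl⟩

theorem CycleThrough.hasWalk {V : Type*} {A : V → V → Prop} {n : ℕ} {x : V}
    (h : CycleThrough A n x) : HasWalk A n x x :=
  let ⟨f, h0, hn, hf, _⟩ := h
  ⟨f, h0, hn, hf⟩

namespace IsComposition

variable {ι W : Type*} {AT : ι → ι → Prop} {AQ : W → W → Prop} {π : W → ι}
  {k n : ℕ} {v y : W}

theorem arc_proj (hcomp : IsComposition AT AQ π) (x y : W) (h : AQ x y) :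
    π x = π y ∨ AT (π x) (π y) :=
  or_iff_not_imp_left.mpr fun hne => (hcomp.cross x y hne).mp h

theorem hasWalk_lift (hcomp : IsComposition AT AQ π) (hT : Irreflexive AT) (hn : n ≠ 0)
    (h : HasWalk AT n (π v) (π y)) : HasWalk AQ n v y := by
  induction n generalizing y with
  | zero => exact absurd rfl hn
  | succ n ih =>
    obtain ⟨j, hj, hjy⟩ := HasWalk.succ_iff.mp h
    obtain ⟨z, hvz, rfl⟩ : ∃ z, HasWalk AQ n v z ∧ π z = j := by
      rcases Nat.eq_zero_or_pos n with rfl | hpos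
      · exact ⟨v, HasWalk.zero_iff.mpr rfl, HasWalk.zero_iff.mp hj⟩
      · obtain ⟨z, rfl⟩ := hcomp.surj j
        exact ⟨z, ih hpos.ne' hj, rfl⟩
    have hne : π z ≠ π y := fun e => hT _ (e ▸ hjy)
    exact HasWalk.succ_iff.mpr ⟨z, hvz, (hcomp.cross z y hne).mpr hjy⟩

theorem isKKing_proj (hcomp : IsComposition AT AQ π) (hv : IsKKing AQ k v) :
    IsKKing AT k (π v) := by
  intro j
  obtain ⟨w, rfl⟩ := hcomp.surj j
  obtain ⟨n, hn, hw⟩ := hv w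
  obtain ⟨m, hm, hw'⟩ := HasWalk.exists_map_le hcomp.arc_proj hw
  exact ⟨m, hm.trans hn, hw'⟩

theorem fiber_isKKing_or_onShortCycle [Finite W] (hcomp : IsComposition AT AQ π)
    (hT : Irreflexive AT) (hv : IsKKing AQ k v) :
    (∃ u, IsKKing (FiberArc AQ π (π v)) k u) ∨
      (2 ≤ Nat.card {w : W // π w = π v} ∧ OnShortCycle AT k (π v)) := by
  by_cases hking : IsKKing (FiberArc AQ π (π v)) k ⟨v, rfl⟩
  · exact Or.inl ⟨_, hking⟩
  obtain ⟨y, hy⟩ := not_forall.mp hking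
  have hne : (⟨v, rfl⟩ : {w : W // π w = π v}) ≠ y := by
    rintro rfl
    exact hy (kReach_refl _ k _)
  obtain ⟨n, hn, hw⟩ := hv y.1
  rcases HasWalk.fiber_or_map hcomp.arc_proj hw with ⟨_, hfib⟩ | ⟨m, hm, hmn, hcl⟩
  · exact absurd ⟨n, hn, hfib⟩ hy
  · rw [y.2] at hcl
    exact Or.inr ⟨Finite.one_lt_card_iff_nontrivial.mpr ⟨_, _, hne⟩,
      hcl.onShortCycle hT hm (hmn.trans hn)⟩

theorem kReach_of_proj_ne (hcomp : IsComposition AT AQ π) (hT : Irreflexive AT)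
    (hv : IsKKing AT k (π v)) (hy : π y ≠ π v) : KReach AQ k v y := by
  obtain ⟨n, hn, hw⟩ := hv (π y)
  have hn0 : n ≠ 0 := by
    rintro rfl
    exact hy (HasWalk.zero_iff.mp hw).symm
  exact ⟨n, hn, hcomp.hasWalk_lift hT hn0 hw⟩

theorem isKKing_of_fiber (hcomp : IsComposition AT AQ π) (hT : Irreflexive AT) {i : ι}
    (hi : IsKKing AT k i) {u : {w : W // π w = i}} (hu : IsKKing (FiberArc AQ π i) k u) :
    IsKKing AQ k u.1 := by
  obtain ⟨v, rfl⟩ := u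
  intro y
  by_cases hy : π y = π v
  · obtain ⟨n, hn, hw⟩ := hu ⟨y, hy⟩
    exact ⟨n, hn,
      HasWalk.map (A := FiberArc AQ π (π v)) (f := Subtype.val) (fun _ _ h => h) hw⟩
  · exact hcomp.kReach_of_proj_ne hT hi hy

theorem isKKing_of_onShortCycle (hcomp : IsComposition AT AQ π) (hT : Irreflexive AT)
    (hv : IsKKing AT k (π v)) (hc : OnShortCycle AT k (π v)) : IsKKing AQ k v := by
  intro y
  by_cases hy : π y = π v
  · obtain ⟨n, hn2, hnk, hcyc⟩ := hc
    exact ⟨n, hnk, hcomp.hasWalk_lift hT (by omega) (hy ▸ hcyc.hasWalk)⟩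
  · exact hcomp.kReach_of_proj_ne hT hv hy

end IsComposition

theorem stmt3_general {ι W : Type*} [Fintype W] (k : ℕ)
    (AT : ι → ι → Prop) (AQ : W → W → Prop) (π : W → ι)
    (hTirr : Irreflexive AT)
    (hcomp : IsComposition AT AQ π) :
    (∃ v : W, IsKKing AQ k v) ↔
      ∃ i : ι, IsKKing AT k i ∧
        ((∃ v : {w : W // π w = i}, IsKKing (FiberArc AQ π i) k v) ∨
          (2 ≤ Nat.card {w : W // π w = i} ∧ OnShortCycle AT k i)) := by
  constructor
  · rintro ⟨v, hv⟩
    exact ⟨π v, hcomp.isKKing_proj hv, hcomp.fiber_isKKing_or_onShortCycle hTirr hv⟩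
  · rintro ⟨i, hi, ⟨u, hu⟩ | ⟨-, hc⟩⟩
    · exact ⟨u.1, hcomp.isKKing_of_fiber hTirr hi hu⟩
    · obtain ⟨v, rfl⟩ := hcomp.surj i
      exact ⟨v, hcomp.isKKing_of_onShortCycle hTirr hi hc⟩

/-- Characterization of digraph compositions with a `k`-king. -/
theorem stmt3 {ι W : Type*} [Fintype ι] [Fintype W] (k : ℕ) (hk : 2 ≤ k)
    (AT : ι → ι → Prop) (AQ : W → W → Prop) (π : W → ι)
    (hcard : 2 ≤ Fintype.card ι)
    (hTirr : Irreflexive AT) (hQirr : Irreflexive AQ)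
    (hcomp : IsComposition AT AQ π) :
    (∃ v : W, IsKKing AQ k v) ↔
      ∃ i : ι, IsKKing AT k i ∧
        ((∃ v : {w : W // π w = i}, IsKKing (FiberArc AQ π i) k v) ∨
          (2 ≤ Nat.card {w : W // π w = i} ∧ OnShortCycle AT k i)) :=
  stmt3_general k AT AQ π hTirr hcomp
end

section
/- Every strongly connected semicomplete digraph on n ≥ 3 vertices is vertex-pancyclic; that is, for every vertex x and every integer k with 3 ≤ k ≤ n, there exists a directed cycle of length k through x. -/
/-! Moon's argument. A vertex `x` lies on a cycle of length 2 or 3: otherwise the out-neighbours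
of `x` form a set closed under arcs that misses `x`, which strong connectivity forbids.
A cycle `C` through `x` of length `k < n` is extended by one vertex. If some vertex outside `C`
receives an arc from `C` and sends one to `C`, it can be inserted between two consecutive
vertices of `C`. Otherwise every outside vertex is dominated by `C` or dominates `C`, and strong
connectivity provides an arc `r → s` from a dominated to a dominating vertex; the path `r → s`
then replaces the last vertex of `C`. -/

section

variable {V : Type*} {A : V → V → Prop}

theorem Strong.mem_of_arc_closed (hA : Strong A) {S : Set V}
    (hS : ∀ a b, a ∈ S → A a b → b ∈ S) {x : V} (hx : x ∈ S) (y : V) : y ∈ S := by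
  obtain ⟨-, n, -, f, rfl, rfl, harc⟩ := hA x y
  have hmem : ∀ i ≤ n, f i ∈ S := by
    intro i hi
    induction i with
    | zero => exact hx
    | succ i ih => exact hS _ _ (ih (by omega)) (harc i (by omega))
  exact hmem n le_rfl

theorem cycleThrough_two {x y : V} (hxy : A x y) (hyx : A y x) (hne : x ≠ y) :
    CycleThrough A 2 x := by
  refine ⟨fun i => if i = 1 then y else x, by simp, by simp, ?_, ?_⟩
  · intro i hi
    interval_cases i <;> simp [hxy, hyx]
  · intro i j hi hj hij
    interval_cases i <;> interval_cases j <;> simp_all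

theorem cycleThrough_three {x y z : V} (hxy : A x y) (hyz : A y z) (hzx : A z x)
    (hxy' : x ≠ y) (hxz : x ≠ z) (hyz' : y ≠ z) : CycleThrough A 3 x := by
  refine ⟨fun i => if i = 1 then y else if i = 2 then z else x, by simp, by simp, ?_, ?_⟩
  · intro i hi
    interval_cases i <;> simp [hxy, hyz, hzx]
  · intro i j hi hj hij
    interval_cases i <;> interval_cases j <;> simp_all

theorem Semicomplete.cycleThrough_two_or_three (hsemi : Semicomplete A) (hstrong : Strong A)
    {x y : V} (hxy : x ≠ y) : CycleThrough A 2 x ∨ CycleThrough A 3 x := by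
  by_contra! h
  obtain ⟨h2, h3⟩ := h
  obtain ⟨a, hax, hxa⟩ : ∃ a, a ≠ x ∧ A x a := by
    by_contra! hno
    refine hxy (hstrong.mem_of_arc_closed (S := {x}) ?_ rfl y).symm
    rintro a b rfl hab
    by_contra hbx
    exact hno b hbx hab
  have hclosed : ∀ a b, a ∈ {v | v ≠ x ∧ A x v} → A a b → b ∈ {v | v ≠ x ∧ A x v} := by
    rintro a b ⟨hax, hxa⟩ hab
    have hbx : b ≠ x := by
      rintro rfl
      exact h2 (cycleThrough_two hxa hab hax.symm)
    refine ⟨hbx, (hsemi x b hbx.symm).resolve_right fun hbx' => ?_⟩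
    rcases eq_or_ne a b with rfl | hab'
    · exact h2 (cycleThrough_two hxa hbx' hax.symm)
    · exact h3 (cycleThrough_three hxa hab hbx' hax.symm hbx.symm hab')
  exact (hstrong.mem_of_arc_closed hclosed ⟨hax, hxa⟩ x).1 rfl

theorem Nat.exists_consecutive_of_lt {P Q : ℕ → Prop} {i j : ℕ} (hij : i < j) (hi : P i)
    (hj : Q j) (hPQ : ∀ m < j, P m ∨ Q m) : ∃ m, i ≤ m ∧ m < j ∧ P m ∧ Q (m + 1) := by
  induction j, hij using Nat.le_induction with
  | base => exact ⟨i, le_rfl, by omega, hi, hj⟩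
  | succ j hij ih =>
    rcases hPQ j (by omega) with hPj | hQj
    · exact ⟨j, by omega, by omega, hPj, hj⟩
    · obtain ⟨m, him, hmj, hm⟩ := ih hQj fun m hm => hPQ m (by omega)
      exact ⟨m, him, by omega, hm⟩

theorem Semicomplete.exists_insertion_point (hsemi : Semicomplete A) {f : ℕ → V} {k : ℕ}
    (hk : f k = f 0) {w : V} (hw : w ∉ f '' Set.Iio k) {i j : ℕ} (hi : i < k)
    (hiw : A (f i) w) (hj : j < k) (hwj : A w (f j)) :
    ∃ p < k, A (f p) w ∧ A w (f (p + 1)) := by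
  have hPQ : ∀ m ≤ k, A (f m) w ∨ A w (f m) := by
    intro m hm
    refine hsemi _ _ fun hfm => hw ?_
    rcases hm.lt_or_eq with hm | rfl
    · exact ⟨m, hm, hfm⟩
    · exact ⟨0, Set.mem_Iio.2 (by omega), hk.symm.trans hfm⟩
  by_cases hwx : A w (f 0)
  · obtain ⟨p, -, hp, hpw⟩ :=
      Nat.exists_consecutive_of_lt hi hiw (hk ▸ hwx) fun m hm => hPQ m hm.le
    exact ⟨p, hp, hpw⟩
  · have hj0 : 0 < j := Nat.pos_of_ne_zero (by rintro rfl; exact hwx hwj)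
    obtain ⟨p, -, hp, hpw⟩ := Nat.exists_consecutive_of_lt hj0
      ((hPQ 0 (Nat.zero_le k)).resolve_right hwx) hwj fun m hm => hPQ m (by omega)
    exact ⟨p, by omega, hpw⟩

def insertAfter {α : Type*} (f : ℕ → α) (p : ℕ) (w : α) : ℕ → α :=
  fun i => if i ≤ p then f i else if i = p + 1 then w else f (i - 1)

section insertAfter

variable {α : Type*} {f : ℕ → α} {p i : ℕ} {w : α}

theorem insertAfter_of_le (h : i ≤ p) : insertAfter f p w i = f i := if_pos h

theorem insertAfter_succ_self : insertAfter f p w (p + 1) = w := by simp [insertAfter]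

theorem insertAfter_of_lt (h : p + 1 < i) : insertAfter f p w i = f (i - 1) := by
  simp [insertAfter, show ¬i ≤ p by omega, h.ne']

end insertAfter

theorem cycleThrough_insertAfter {f : ℕ → V} {k p : ℕ} {x w : V} (hp : p < k) (h0 : f 0 = x)
    (hk : f k = x) (harc : ∀ i < k, i ≠ p → A (f i) (f (i + 1)))
    (hinj : Set.InjOn f (Set.Iio k)) (hw : w ∉ f '' Set.Iio k) (hpw : A (f p) w)
    (hwp : A w (f (p + 1))) : CycleThrough A (k + 1) x := by
  refine ⟨insertAfter f p w, by rw [insertAfter_of_le p.zero_le, h0],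
    by rw [insertAfter_of_lt (by omega), Nat.add_sub_cancel, hk], ?_, ?_⟩
  · intro i hi
    rcases lt_trichotomy i p with hip | rfl | hip
    · rw [insertAfter_of_le hip.le, insertAfter_of_le hip]
      exact harc i (by omega) hip.ne
    · rwa [insertAfter_of_le le_rfl, insertAfter_succ_self]
    · rcases Nat.lt_or_eq_of_le hip with hip | rfl
      · rw [insertAfter_of_lt hip, insertAfter_of_lt (by omega), Nat.add_sub_cancel,
          ← Nat.sub_add_cancel (show 1 ≤ i by omega)]
        exact harc (i - 1) (by omega) (by omega)
      · rwa [insertAfter_succ_self, insertAfter_of_lt (by omega), Nat.add_sub_cancel]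
  · intro i hi j hj hij
    simp only [insertAfter] at hij
    split_ifs at hij <;> first
      | omega
      | exact (hw ⟨_, Set.mem_Iio.2 (by omega), hij⟩).elim
      | exact (hw ⟨_, Set.mem_Iio.2 (by omega), hij.symm⟩).elim
      | (have := hinj (Set.mem_Iio.2 (by omega)) (Set.mem_Iio.2 (by omega)) hij; omega)

theorem Set.InjOn.update {α β : Type*} [DecidableEq α] {f : α → β} {s : Set α}
    (hf : Set.InjOn f s) {b : β} (hb : b ∉ f '' s) (a : α) :
    Set.InjOn (Function.update f a b) s := by
  intro i hi j hj hij
  simp only [Function.update_apply] at hij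
  split_ifs at hij with hia hja hja
  · exact hia.trans hja.symm
  · exact (hb ⟨j, hj, hij.symm⟩).elim
  · exact (hb ⟨i, hi, hij⟩).elim
  · exact hf hi hj hij

theorem cycleThrough_replaceLast {f : ℕ → V} {k : ℕ} {x r s : V} (hk2 : 2 ≤ k)
    (h0 : f 0 = x) (hk : f k = x) (harc : ∀ i < k, A (f i) (f (i + 1)))
    (hinj : Set.InjOn f (Set.Iio k)) (hr : r ∉ f '' Set.Iio k) (hs : s ∉ f '' Set.Iio k)
    (hne : r ≠ s) (hfr : A (f (k - 2)) r) (hrs : A r s) (hsx : A s x) :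
    CycleThrough A (k + 1) x := by
  refine cycleThrough_insertAfter (f := Function.update f (k - 1) r) (p := k - 1) (by omega)
    (by rw [Function.update_of_ne (by omega), h0]) (by rw [Function.update_of_ne (by omega), hk])
    ?_ (hinj.update hr _) ?_ (by rwa [Function.update_self]) ?_
  · intro i hi hik
    rw [Function.update_of_ne hik]
    rcases eq_or_ne (i + 1) (k - 1) with hi1 | hi1
    · rw [hi1, Function.update_self, show i = k - 2 by omega]
      exact hfr
    · rw [Function.update_of_ne hi1]
      exact harc i hi
  · rintro ⟨i, hi, hsi⟩
    rw [Function.update_apply] at hsi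
    split_ifs at hsi
    · exact hne hsi
    · exact hs ⟨i, hi, hsi⟩
  · rwa [Nat.sub_add_cancel (by omega : 1 ≤ k), Function.update_of_ne (by omega), hk]

theorem Semicomplete.exists_arc_dominated_to_dominating (hsemi : Semicomplete A)
    (hstrong : Strong A) {C : Set V} {c w : V} (hc : c ∈ C) (hw : w ∉ C)
    (hC : ∀ v ∉ C, (∃ a ∈ C, A a v) → ∀ b ∈ C, ¬ A v b) :
    ∃ r ∉ C, ∃ s ∉ C, (∀ a ∈ C, A a r) ∧ (∀ b ∈ C, A s b) ∧ A r s := by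
  set R := {v | v ∉ C ∧ ∃ a ∈ C, A a v}
  have hdom : ∀ v ∉ C, (∃ a ∈ C, A a v) → ∀ a ∈ C, A a v := fun v hv hin a ha =>
    (hsemi a v fun h => hv (h ▸ ha)).resolve_right (hC v hv hin a ha)
  have hdom' : ∀ v ∉ C, v ∉ R → ∀ b ∈ C, A v b := fun v hv hvR b hb =>
    (hsemi v b fun h => hv (h ▸ hb)).resolve_right fun hbv => hvR ⟨hv, b, hb, hbv⟩
  by_contra! hno
  have hR : ∀ r v, r ∈ R → A r v → v ∈ R := by
    rintro r v ⟨hr, hin⟩ hrv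
    have hv : v ∉ C := fun hv => hC r hr hin v hv hrv
    by_contra hvR
    exact hno r hr v hv (hdom r hr hin) (hdom' v hv hvR) hrv
  have hCR : ∀ a v, a ∈ C ∪ R → A a v → v ∈ C ∪ R := by
    rintro a v (ha | ha) hav
    · by_cases hv : v ∈ C
      · exact Or.inl hv
      · exact Or.inr ⟨hv, a, ha, hav⟩
    · exact Or.inr (hR a v ha hav)
  have hwR : w ∈ R := (hstrong.mem_of_arc_closed hCR (Or.inl hc) w).resolve_left hw
  exact (hstrong.mem_of_arc_closed hR hwR c).1 hc

theorem Semicomplete.cycleThrough_succ [Fintype V] (hsemi : Semicomplete A) (hstrong : Strong A)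
    {x : V} {k : ℕ} (hk : 2 ≤ k) (hkn : k < Fintype.card V) (hc : CycleThrough A k x) :
    CycleThrough A (k + 1) x := by
  obtain ⟨f, h0, hfk, harc, hinj⟩ := hc
  replace hinj : Set.InjOn f (Set.Iio k) := fun i hi j hj => hinj i j hi hj
  set C := f '' Set.Iio k
  have hx : x ∈ C := ⟨0, Set.mem_Iio.2 (by omega), h0⟩
  obtain ⟨w, hw⟩ : ∃ w, w ∉ C := by
    by_contra! hall
    have := Fintype.card_le_of_surjective (fun i : Fin k => f i) fun v => by
      obtain ⟨i, hi, rfl⟩ := hall v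
      exact ⟨⟨i, hi⟩, rfl⟩
    simp only [Fintype.card_fin] at this
    omega
  by_cases hins : ∃ v ∉ C, (∃ a ∈ C, A a v) ∧ ∃ b ∈ C, A v b
  · obtain ⟨v, hv, ⟨_, ⟨i, hi, rfl⟩, hiv⟩, _, ⟨j, hj, rfl⟩, hvj⟩ := hins
    obtain ⟨p, hp, hpv, hvp⟩ :=
      hsemi.exists_insertion_point (hfk.trans h0.symm) hv hi hiv hj hvj
    exact cycleThrough_insertAfter hp h0 hfk (fun i hi _ => harc i hi) hinj hv hpv hvp
  · push Not at hins
    obtain ⟨r, hr, s, hs, hCr, hsC, hrs⟩ :=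
      hsemi.exists_arc_dominated_to_dominating hstrong hx hw hins
    have hrs_ne : r ≠ s := by
      rintro rfl
      exact hins r hr ⟨x, hx, hCr x hx⟩ x hx (hsC x hx)
    exact cycleThrough_replaceLast hk h0 hfk harc hinj hr hs hrs_ne
      (hCr _ ⟨k - 2, Set.mem_Iio.2 (by omega), rfl⟩) hrs (hsC x hx)

end

theorem stmt5_general {V : Type*} [Fintype V] (A : V → V → Prop)
    (hsemi : Semicomplete A) (hstrong : Strong A) :
    ∀ x : V, ∀ k : ℕ, 3 ≤ k → k ≤ Fintype.card V → CycleThrough A k x := by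
  intro x k hk hkn
  induction k, hk using Nat.le_induction with
  | base =>
    obtain ⟨y, hy⟩ := Fintype.exists_ne_of_one_lt_card (by omega) x
    rcases hsemi.cycleThrough_two_or_three hstrong hy.symm with h2 | h3
    · exact hsemi.cycleThrough_succ hstrong le_rfl (by omega) h2
    · exact h3
  | succ k hk ih => exact hsemi.cycleThrough_succ hstrong (by omega) (by omega) (ih (by omega))

/-- Every strongly connected semicomplete digraph on at least 3 vertices is
vertex-pancyclic. -/
theorem stmt5 {V : Type*} [Fintype V] (A : V → V → Prop)
    (hirr : Irreflexive A) (hsemi : Semicomplete A) (hstrong : Strong A)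
    (hcard : 3 ≤ Fintype.card V) :
    ∀ x : V, ∀ k : ℕ, 3 ≤ k → k ≤ Fintype.card V → CycleThrough A k x :=
  stmt5_general A hsemi hstrong
end

section
/- Let Q = T[H_1, ..., H_t] be a semicomplete composition having a 3-king. If T has no source (vertex of in-degree 0), then Q has at least two 3-kings. -/
/-!
Let `v` be a 3-king of `Q`. If `v` reaches every vertex outside its own fiber within two
steps, then any vertex `w` of an in-neighbour class of `π v` (which exists since `T` has no
source) is a second 3-king: `w` dominates the whole fiber of `v`, and reaches everything else
through `v`. Otherwise some `y` outside the fiber of `v` is at distance 3 from `v`; then `y`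
dominates `v` and every out-neighbour of `v` (an out-neighbour `u` not dominated by `y` would
give the path `v → u → y`, by semicompleteness of `T`), so `y` is a 3-king as well.
-/

section KReach

variable {V : Type*} {A : V → V → Prop} {k l : ℕ} {x y z : V}

theorem KReach.refl (A : V → V → Prop) (k : ℕ) (x : V) : KReach A k x x :=
  ⟨0, Nat.zero_le k, fun _ => x, rfl, rfl, fun _ hi => absurd hi (Nat.not_lt_zero _)⟩

theorem KReach.mono (hkl : k ≤ l) : KReach A k x y → KReach A l x y
  | ⟨n, hn, f, hf⟩ => ⟨n, hn.trans hkl, f, hf⟩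

theorem KReach.cons (hxy : A x y) : KReach A k y z → KReach A (k + 1) x z := by
  rintro ⟨n, hn, f, hf0, hfn, harc⟩
  refine ⟨n + 1, by omega, fun | 0 => x | i + 1 => f i, rfl, hfn, ?_⟩
  rintro (_ | i) hi
  · simpa [hf0] using hxy
  · exact harc i (by omega)

theorem KReach.of_arc (hxy : A x y) : KReach A 1 x y :=
  (KReach.refl A 0 y).cons hxy

theorem KReach.eq_or_exists_arc (h : KReach A (k + 1) x z) :
    x = z ∨ ∃ y, A x y ∧ KReach A k y z := by
  obtain ⟨n, hn, f, hf0, hfn, harc⟩ := h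
  cases n with
  | zero => exact Or.inl (hf0 ▸ hfn)
  | succ m =>
    exact Or.inr ⟨f 1, hf0 ▸ harc 0 (by omega),
      m, by omega, fun i => f (i + 1), rfl, hfn, fun i hi => harc (i + 1) (by omega)⟩

end KReach

section IsKKing

variable {V : Type*} {A : V → V → Prop} {k : ℕ} {v w : V}

theorem IsKKing.of_forall_arc_or_kReach (hwv : A w v) (h : ∀ z, A w z ∨ KReach A k v z) :
    IsKKing A (k + 1) w := fun z =>
  (h z).elim (fun hwz => (KReach.of_arc hwz).mono (by omega)) (KReach.cons hwv)

theorem IsKKing.of_arc_of_forall_arc (hv : IsKKing A (k + 1) v) (hwv : A w v)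
    (hsub : ∀ u, A v u → A w u) : IsKKing A (k + 1) w := fun z =>
  match (hv z).eq_or_exists_arc with
  | .inl rfl => (KReach.of_arc hwv).mono (by omega)
  | .inr ⟨_, hvu, hu⟩ => hu.cons (hsub _ hvu)

end IsKKing

namespace IsComposition

variable {ι W : Type*} {AT : ι → ι → Prop} {AQ : W → W → Prop} {π : W → ι}
  {v w x y y' : W}

theorem arc_of_fiber_eq (hc : IsComposition AT AQ π) (hxy : π x ≠ π y) (hy' : π y' = π y)
    (h : AQ x y) : AQ x y' :=
  (hc.cross x y' (hy' ▸ hxy)).2 (hy' ▸ (hc.cross x y hxy).1 h)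

theorem arc_or_arc (hc : IsComposition AT AQ π) (hsemi : Semicomplete AT) (hxy : π x ≠ π y) :
    AQ x y ∨ AQ y x :=
  (hsemi _ _ hxy).imp (hc.cross x y hxy).2 (hc.cross y x hxy.symm).2

theorem exists_arc_from_other_fiber (hc : IsComposition AT AQ π) (hTirr : ∀ i, ¬ AT i i)
    (hnosource : ∀ i, ∃ j, AT j i) (v : W) : ∃ w, π w ≠ π v ∧ AQ w v := by
  obtain ⟨j, hj⟩ := hnosource (π v)
  obtain ⟨w, rfl⟩ := hc.surj j
  have hwv : π w ≠ π v := fun h => hTirr _ (h ▸ hj)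
  exact ⟨w, hwv, (hc.cross w v hwv).2 hj⟩

theorem dominates_of_not_kReach_two (hc : IsComposition AT AQ π) (hsemi : Semicomplete AT)
    (hvy : π v ≠ π y) (hy : ¬ KReach AQ 2 v y) : AQ y v ∧ ∀ u, AQ v u → AQ y u := by
  have hnvy : ¬ AQ v y := fun h => hy ((KReach.of_arc h).mono (by omega))
  have hyv : AQ y v := (hc.arc_or_arc hsemi hvy).resolve_left hnvy
  refine ⟨hyv, fun u hvu => ?_⟩
  by_cases huv : π u = π v
  · exact hc.arc_of_fiber_eq hvy.symm huv hyv
  have hvu' : π v ≠ π u := Ne.symm huv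
  by_cases huy : π u = π y
  · exact absurd (hc.arc_of_fiber_eq hvu' huy.symm hvu) hnvy
  exact (hc.arc_or_arc hsemi (Ne.symm huy)).resolve_right
    fun huy' => hy ((KReach.of_arc huy').cons hvu)

end IsComposition

theorem stmt8_general {ι W : Type*}
    (AT : ι → ι → Prop) (AQ : W → W → Prop) (π : W → ι)
    (hTirr : Irreflexive AT)
    (hsemi : Semicomplete AT) (hcomp : IsComposition AT AQ π)
    (hking : ∃ v : W, IsKKing AQ 3 v)
    (hnosource : ∀ i : ι, ∃ j : ι, AT j i) :
    ∃ x y : W, x ≠ y ∧ IsKKing AQ 3 x ∧ IsKKing AQ 3 y := by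
  obtain ⟨v, hv⟩ := hking
  by_cases hreach : ∀ z, π z ≠ π v → KReach AQ 2 v z
  · obtain ⟨w, hwv, hQwv⟩ := hcomp.exists_arc_from_other_fiber hTirr hnosource v
    refine ⟨v, w, fun h => hwv (h ▸ rfl), hv,
      IsKKing.of_forall_arc_or_kReach hQwv fun z => ?_⟩
    by_cases hz : π z = π v
    · exact Or.inl (hcomp.arc_of_fiber_eq hwv hz hQwv)
    · exact Or.inr (hreach z hz)
  · push Not at hreach
    obtain ⟨y, hyv, hy⟩ := hreach
    obtain ⟨hQyv, hsub⟩ := hcomp.dominates_of_not_kReach_two hsemi (Ne.symm hyv) hy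
    exact ⟨v, y, fun h => hyv (h ▸ rfl), hv, hv.of_arc_of_forall_arc hQyv hsub⟩

/-- A semicomplete composition with a 3-king whose outer digraph has no source
has at least two 3-kings. -/
theorem stmt8 {ι W : Type*} [Fintype ι] [Fintype W]
    (AT : ι → ι → Prop) (AQ : W → W → Prop) (π : W → ι)
    (hcard : 2 ≤ Fintype.card ι)
    (hTirr : Irreflexive AT) (hQirr : Irreflexive AQ)
    (hsemi : Semicomplete AT) (hcomp : IsComposition AT AQ π)
    (hking : ∃ v : W, IsKKing AQ 3 v)
    (hnosource : ∀ i : ι, ∃ j : ι, AT j i) :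
    ∃ x y : W, x ≠ y ∧ IsKKing AQ 3 x ∧ IsKKing AQ 3 y :=
  stmt8_general AT AQ π hTirr hsemi hcomp hking hnosource
end

section
/- Let Q = T[H_1, ..., H_t] be a strongly connected semicomplete composition. If T has a strict 3-king and every 2-king of T is dominated by some strict 3-king of T, then there exists a semicomplete composition Q' containing Q as an induced subdigraph such that the set of all 3-kings of Q' is exactly V(Q). -/
/-!
For every strict 3-king `s` of `T`, add a new one-vertex fiber `ŝ` (a hub): every old vertex
dominates every hub, `ŝ` dominates exactly the fiber of `s`, and hubs are joined as their kings
are in `T`. An old vertex `x` reaches each hub in one step and any old `y` along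
`x → ŝ → y` or `x → ŝ → w → y` with `w` in the fiber of `s`, where `s` is a strict 3-king equal to
or dominating the fiber of `y`; the domination hypothesis makes such an `s` exist. Conversely,
a walk of length at most 3 from `ŝ` to an old vertex ends in a fiber at distance at most 2
from `s` in `T` or in the fiber of a strict 3-king, and a 2-king of `T` at distance 3 from `s`
indexes a fiber that is neither, so no hub is a 3-king.
-/

namespace KReach

variable {V : Type*} {A : V → V → Prop} {k l : ℕ} {x y z : V}

theorem refl_s12 (A : V → V → Prop) (k : ℕ) (x : V) : KReach A k x x :=
  ⟨0, k.zero_le, fun _ => x, rfl, rfl, fun _ h => absurd h (Nat.not_lt_zero _)⟩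

theorem mono_s12 (h : KReach A k x y) (hkl : k ≤ l) : KReach A l x y :=
  let ⟨n, hn, f, hf⟩ := h
  ⟨n, hn.trans hkl, f, hf⟩

theorem snoc (h : KReach A k x y) (hyz : A y z) : KReach A (k + 1) x z := by
  obtain ⟨n, hn, f, h0, hfn, harc⟩ := h
  refine ⟨n + 1, by omega, Function.update f (n + 1) z, ?_, by simp, fun i hi => ?_⟩
  · rw [Function.update_of_ne (by omega), h0]
  · rw [Function.update_of_ne (by omega)]
    rcases Nat.lt_succ_iff_lt_or_eq.mp hi with hi | rfl
    · rw [Function.update_of_ne (by omega)]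
      exact harc i hi
    · simpa [hfn] using hyz

theorem snoc_of_eq_or (h : KReach A k x y) (hyz : y = z ∨ A y z) : KReach A (k + 1) x z := by
  rcases hyz with rfl | hyz
  · exact h.mono_s12 k.le_succ
  · exact h.snoc hyz

theorem single (h : A x y) : KReach A 1 x y :=
  (refl_s12 A 0 x).snoc h

theorem eq_or_exists_last (h : KReach A (k + 1) x z) :
    x = z ∨ ∃ y, KReach A k x y ∧ A y z := by
  obtain ⟨n, hn, f, h0, hfn, harc⟩ := h
  rcases n with _ | n
  · exact .inl (h0.symm.trans hfn)
  · exact .inr ⟨f n, ⟨n, by omega, f, h0, rfl, fun i hi => harc i (by omega)⟩,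
      hfn ▸ harc n (by omega)⟩

theorem eq_or_of_one (h : KReach A 1 x y) : x = y ∨ A x y := by
  rcases h.eq_or_exists_last with hxy | ⟨z, hz, hzy⟩
  · exact .inl hxy
  · obtain ⟨n, hn, f, h0, hfn, -⟩ := hz
    obtain rfl : n = 0 := by omega
    exact .inr (h0.symm.trans hfn ▸ hzy)

theorem map {V' : Type*} {B : V' → V' → Prop} (g : V → V')
    (hg : ∀ a b, A a b → B (g a) (g b)) (h : KReach A k x y) : KReach B k (g x) (g y) := by
  obtain ⟨n, hn, f, h0, hfn, harc⟩ := h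
  exact ⟨n, hn, g ∘ f, by simp [h0], by simp [hfn], fun i hi => hg _ _ (harc i hi)⟩

theorem of_delArc {P : V → Prop} {a b : Subtype P} (h : KReach (DelArc A P) k a b) :
    KReach A k a b :=
  h.map Subtype.val fun _ _ => id

end KReach

theorem IsKKing.not_isStrictKKing_succ {V : Type*} {A : V → V → Prop} {k : ℕ} {x : V}
    (h : IsKKing A k x) : ¬ IsStrictKKing A (k + 1) x :=
  fun ⟨_, y, hy⟩ => hy (h y)

namespace Semicomplete

variable {V : Type*} {A : V → V → Prop}

theorem delArc (hA : Semicomplete A) (P : V → Prop) : Semicomplete (DelArc A P) :=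
  fun a b hab => hA a b (Subtype.coe_ne_coe.mpr hab)

/-- A vertex with the most out-neighbours other than itself is a 2-king. -/
theorem exists_isKKing_two [Finite V] [Nonempty V] (hA : Semicomplete A) :
    ∃ k, IsKKing A 2 k := by
  classical
  have := Fintype.ofFinite V
  let N : V → Finset V := fun v => {p | p ≠ v ∧ A v p}
  obtain ⟨k, -, hmax⟩ := Finset.univ.exists_max_image (fun v => (N v).card) Finset.univ_nonempty
  refine ⟨k, fun y => by_contra fun hky => ?_⟩
  have hky' : k ≠ y := fun h => hky (h ▸ KReach.refl_s12 A 2 k)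
  have hyk : A y k := (hA y k hky'.symm).resolve_right
    fun h => hky ((KReach.single h).mono_s12 one_le_two)
  have hsub : insert k (N k) ⊆ N y := by
    intro p hp
    rcases Finset.mem_insert.mp hp with rfl | hp
    · simp [N, hky', hyk]
    · simp only [N, Finset.mem_filter, Finset.mem_univ, true_and] at hp ⊢
      have hpy : p ≠ y := fun h => hky ((KReach.single (h ▸ hp.2)).mono_s12 one_le_two)
      exact ⟨hpy, (hA y p hpy.symm).resolve_right fun h => hky ((KReach.single hp.2).snoc h)⟩
  have hcard := Finset.card_le_card hsub
  rw [Finset.card_insert_of_notMem (by simp [N])] at hcard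
  have := hmax y (Finset.mem_univ y)
  omega

theorem exists_isKKing_two_eq_or_adj [Finite V] (hA : Semicomplete A) (v : V) :
    ∃ k, IsKKing A 2 k ∧ (k = v ∨ A k v) := by
  by_cases hin : ∃ u, A u v
  · obtain ⟨u, hu⟩ := hin
    have : Nonempty {u // A u v} := ⟨⟨u, hu⟩⟩
    obtain ⟨k, hk⟩ := (hA.delArc fun u => A u v).exists_isKKing_two
    refine ⟨k, fun y => ?_, .inr k.2⟩
    by_cases hyv : A y v
    · exact (hk ⟨y, hyv⟩).of_delArc
    rcases eq_or_ne v y with rfl | hvy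
    · exact (KReach.single k.2).mono_s12 one_le_two
    · exact (KReach.single k.2).snoc ((hA v y hvy).resolve_right hyv)
  · refine ⟨v, fun y => ?_, .inl rfl⟩
    rcases eq_or_ne v y with rfl | hvy
    · exact KReach.refl_s12 A 2 v
    · exact (KReach.single ((hA v y hvy).resolve_right (not_exists.mp hin y))).mono_s12 one_le_two

/-- Otherwise `v` would dominate every strict 3-king and hence be a strict 3-king itself. -/
theorem exists_isStrictKKing_three_eq_or_adj [Finite V] (hA : Semicomplete A)
    (hdom : ∀ u, IsKKing A 2 u → ∃ w, IsStrictKKing A 3 w ∧ A w u) (v : V) :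
    ∃ s, IsStrictKKing A 3 s ∧ (s = v ∨ A s v) := by
  by_contra! hcon
  have hv_adj : ∀ s, IsStrictKKing A 3 s → A v s := fun s hs =>
    (hA s v (hcon s hs).1).resolve_left (hcon s hs).2
  have hking : IsKKing A 3 v := fun y => by
    obtain ⟨k, hk, hky⟩ := hA.exists_isKKing_two_eq_or_adj y
    obtain ⟨s, hs, hsk⟩ := hdom k hk
    exact ((KReach.single (hv_adj s hs)).snoc hsk).snoc_of_eq_or hky
  have hnot_two : ¬ IsKKing A 2 v := fun h =>
    let ⟨s, hs, hsv⟩ := hdom v h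
    (hcon s hs).2 hsv
  exact (hcon v ⟨hking, by simpa [IsKKing] using hnot_two⟩).1 rfl

/-- A 2-king of the vertices at distance at least 3 from `s` dominates `s` and its
out-neighbours, so it is a 2-king of the whole digraph. -/
theorem exists_isKKing_two_not_kReach_two [Finite V] (hA : Semicomplete A) {s : V}
    (hs : ∃ y, ¬ KReach A 2 s y) : ∃ m, ¬ KReach A 2 s m ∧ IsKKing A 2 m := by
  obtain ⟨y, hy⟩ := hs
  have : Nonempty {m // ¬ KReach A 2 s m} := ⟨⟨y, hy⟩⟩
  obtain ⟨m, hm⟩ := (hA.delArc fun m => ¬ KReach A 2 s m).exists_isKKing_two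
  refine ⟨m, m.2, fun z => ?_⟩
  by_cases hz : KReach A 2 s z
  · have hm_adj : ∀ p, KReach A 1 s p → A m p := fun p hp =>
      (hA m p fun h => m.2 (by rw [h]; exact hp.mono_s12 one_le_two)).resolve_right
        fun h => m.2 (hp.snoc h)
    rcases hz.eq_or_exists_last with rfl | ⟨p, hp, hpz⟩
    · exact (KReach.single (hm_adj _ (KReach.refl_s12 A 1 _))).mono_s12 one_le_two
    · exact (KReach.single (hm_adj p hp)).snoc hpz
  · exact (hm ⟨z, hz⟩).of_delArc

end Semicomplete

theorem IsComposition.eq_or_adj {ι W : Type*} {AT : ι → ι → Prop} {AQ : W → W → Prop}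
    {π : W → ι} (h : IsComposition AT AQ π) {x y : W} (hxy : AQ x y) :
    π x = π y ∨ AT (π x) (π y) :=
  (eq_or_ne (π x) (π y)).imp_right fun hne => (h.cross x y hne).mp hxy

section Hub

variable {ι W : Type*} (AT : ι → ι → Prop) (AQ : W → W → Prop) (π : W → ι) (P : ι → Prop)

/-- The hub `ŝ` of `s` is `.inr s`, a fiber of its own. -/
def hubT : ι ⊕ Subtype P → ι ⊕ Subtype P → Prop
  | .inl i, .inl j => AT i j
  | .inl _, .inr _ => True
  | .inr s, .inl j => j = s
  | .inr s, .inr t => AT s t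

def hubQ : W ⊕ Subtype P → W ⊕ Subtype P → Prop
  | .inl x, .inl y => AQ x y
  | .inl _, .inr _ => True
  | .inr s, .inl y => π y = s
  | .inr s, .inr t => AT s t

variable {AT AQ π P}

theorem semicomplete_hubT (h : Semicomplete AT) : Semicomplete (hubT AT P) := by
  rintro (i | s) (j | t) hne
  · exact h i j fun e => hne (congrArg _ e)
  · exact .inl trivial
  · exact .inr trivial
  · exact h s t fun e => hne (congrArg _ (Subtype.ext e))

theorem isComposition_hubQ (h : IsComposition AT AQ π) :
    IsComposition (hubT AT P) (hubQ AT AQ π P) (Sum.map π id) where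
  surj := by
    rintro (i | s)
    · obtain ⟨w, rfl⟩ := h.surj i
      exact ⟨.inl w, rfl⟩
    · exact ⟨.inr s, rfl⟩
  cross := by
    rintro (x | s) (y | t) hne
    · exact h.cross x y fun e => hne (congrArg Sum.inl e)
    all_goals exact Iff.rfl

theorem isKKing_hubQ_inl (h : IsComposition AT AQ π)
    (hP : ∀ j, ∃ s, P s ∧ (s = j ∨ AT s j)) (x : W) :
    IsKKing (hubQ AT AQ π P) 3 (.inl x) := by
  rintro (y | t)
  · obtain ⟨s, hs, hsy⟩ := hP (π y)
    have hxs : KReach (hubQ AT AQ π P) 1 (.inl x) (.inr ⟨s, hs⟩) := .single trivial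
    by_cases hys : π y = s
    · have hsy_arc : hubQ AT AQ π P (.inr ⟨s, hs⟩) (.inl y) := hys
      exact (hxs.snoc hsy_arc).mono_s12 (by norm_num)
    · obtain ⟨w, hw⟩ := h.surj s
      have hsw : hubQ AT AQ π P (.inr ⟨s, hs⟩) (.inl w) := hw
      have hwy : AQ w y :=
        (h.cross w y (by rwa [hw, ne_comm])).mpr (by rw [hw]; exact hsy.resolve_left (Ne.symm hys))
      exact (hxs.snoc hsw).snoc hwy
  · exact (KReach.single trivial).mono_s12 (by norm_num)

theorem kReach_two_of_hubQ_inr_inl (h : IsComposition AT AQ π) {s : Subtype P} {b : W}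
    (hb : KReach (hubQ AT AQ π P) 2 (.inr s) (.inl b)) : KReach AT 1 s (π b) := by
  rcases hb.eq_or_exists_last with hsb | ⟨p, hp, hpb⟩
  · cases hsb
  rcases hp.eq_or_of_one with rfl | hsp
  · rw [show π b = s from hpb]
    exact KReach.refl_s12 AT 1 s
  rcases p with a | t
  · have hsa : π a = s := hsp
    exact (KReach.refl_s12 AT 0 s).snoc_of_eq_or (hsa ▸ h.eq_or_adj hpb)
  · rw [show π b = t from hpb]
    exact .single hsp

theorem kReach_three_of_hubQ_inr_inl (h : IsComposition AT AQ π) {s : Subtype P} {z : W}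
    (hz : KReach (hubQ AT AQ π P) 3 (.inr s) (.inl z)) : KReach AT 2 s (π z) ∨ P (π z) := by
  rcases hz.eq_or_exists_last with hsz | ⟨b | t, hb, hbz⟩
  · cases hsz
  · exact .inl ((kReach_two_of_hubQ_inr_inl h hb).snoc_of_eq_or (h.eq_or_adj hbz))
  · rw [show π z = t from hbz]
    exact .inr t.2

theorem not_isKKing_hubQ_inr (h : IsComposition AT AQ π) {s : Subtype P} {m : ι}
    (hsm : ¬ KReach AT 2 s m) (hm : ¬ P m) : ¬ IsKKing (hubQ AT AQ π P) 3 (.inr s) := by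
  intro hs
  obtain ⟨z, rfl⟩ := h.surj m
  exact (kReach_three_of_hubQ_inr_inl h (hs (.inl z))).elim hsm hm

end Hub

theorem stmt12_general {ι W : Type} [Fintype ι] [Fintype W]
    (AT : ι → ι → Prop) (AQ : W → W → Prop) (π : W → ι)
    (hsemi : Semicomplete AT) (hcomp : IsComposition AT AQ π)
    (hdom : ∀ u : ι, IsKKing AT 2 u → ∃ w : ι, IsStrictKKing AT 3 w ∧ AT w u) :
    ∃ (W' : Type) (_ : Fintype W') (ι' : Type) (AT' : ι' → ι' → Prop)
      (AQ' : W' → W' → Prop) (π' : W' → ι') (e : W → W'),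
      Function.Injective e ∧ Semicomplete AT' ∧ IsComposition AT' AQ' π' ∧
      (∀ x y : W, AQ x y ↔ AQ' (e x) (e y)) ∧
      (∀ w' : W', IsKKing AQ' 3 w' ↔ w' ∈ Set.range e) := by
  classical
  refine ⟨_, inferInstance, _, hubT AT (IsStrictKKing AT 3), hubQ AT AQ π (IsStrictKKing AT 3),
    Sum.map π id, Sum.inl, Sum.inl_injective, semicomplete_hubT hsemi, isComposition_hubQ hcomp,
    fun _ _ => Iff.rfl, ?_⟩
  rintro (x | s)
  · simpa using isKKing_hubQ_inl hcomp (hsemi.exists_isStrictKKing_three_eq_or_adj hdom) x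
  · obtain ⟨m, hsm, hm⟩ := hsemi.exists_isKKing_two_not_kReach_two s.2.2
    simpa using not_isKKing_hubQ_inr hcomp hsm hm.not_isStrictKKing_succ

/-- If `T` has a strict 3-king and every 2-king of `T` is dominated by some strict
3-king of `T`, then the strong semicomplete composition `Q` can be established:
there is a semicomplete composition `Q'` containing `Q` as an induced subdigraph
whose set of 3-kings is exactly `V(Q)`. -/
theorem stmt12 {ι W : Type} [Fintype ι] [Fintype W]
    (AT : ι → ι → Prop) (AQ : W → W → Prop) (π : W → ι)
    (hcard : 2 ≤ Fintype.card ι)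
    (hTirr : Irreflexive AT) (hQirr : Irreflexive AQ)
    (hsemi : Semicomplete AT) (hcomp : IsComposition AT AQ π)
    (hstrong : Strong AQ)
    (hstrict : ∃ u : ι, IsStrictKKing AT 3 u)
    (hdom : ∀ u : ι, IsKKing AT 2 u → ∃ w : ι, IsStrictKKing AT 3 w ∧ AT w u) :
    ∃ (W' : Type) (_ : Fintype W') (ι' : Type) (AT' : ι' → ι' → Prop)
      (AQ' : W' → W' → Prop) (π' : W' → ι') (e : W → W'),
      Function.Injective e ∧ Semicomplete AT' ∧ IsComposition AT' AQ' π' ∧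
      (∀ x y : W, AQ x y ↔ AQ' (e x) (e y)) ∧
      (∀ w' : W', IsKKing AQ' 3 w' ↔ w' ∈ Set.range e) :=
  stmt12_general AT AQ π hsemi hcomp hdom
end

section
/- Let Q = T[H_1, ..., H_t] be a semicomplete composition such that T has no sink (vertex of out-degree 0). Then Q contains two disjoint quasi-kernels. -/
/-!
In the semicomplete digraph `T`, a vertex `x` of maximum in-degree is reached from every
other vertex in at most two steps, and since `T` has no sink, so is a vertex `y` of maximum
in-degree inside the out-neighbourhood of `x`; thus `{x}` and `{y}` are distinct
`2`-absorbing singletons. Over a `2`-absorbing vertex `i` of `T`, any quasi-kernel of `H_i`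
is a quasi-kernel of `T[H_1, …, H_t]`: a vertex outside the fibre of `i` follows a path of
length at most two in `T` to `i`, and such a path lifts to the composition. The quasi-kernels
over `x` and over `y` lie in different fibres.
-/

section KReach

variable {V : Type*} {A : V → V → Prop} {k : ℕ} {x y z : V}

theorem KReach.of_adj (h : A x y) (hk : 1 ≤ k) : KReach A k x y :=
  ⟨1, hk, fun i => if i = 0 then x else y, rfl, rfl, fun i hi => by
    obtain rfl : i = 0 := by omega
    simpa using h⟩

theorem KReach.of_adj_of_adj (hxz : A x z) (hzy : A z y) (hk : 2 ≤ k) : KReach A k x y :=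
  ⟨2, hk, fun i => if i = 0 then x else if i = 1 then z else y, rfl, rfl, fun i hi => by
    interval_cases i <;> simpa⟩

end KReach

/-- The Chvátal–Lovász construction, relative to a finite vertex set `S`: delete a vertex `v`
together with its in-neighbours, recurse, and add `v` unless it already has an out-neighbour
in the recursively obtained set. -/
theorem exists_quasiKernel_subset {V : Type*} (A : V → V → Prop) (S : Finset V) :
    ∃ K : Set V, K ⊆ S ∧ (∀ x ∈ K, ∀ y ∈ K, x ≠ y → ¬ A x y) ∧
      ∀ x ∈ S, x ∉ K → ∃ y ∈ K, KReach A 2 x y := by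
  classical
  induction S using Finset.strongInduction with
  | H S ih =>
    rcases S.eq_empty_or_nonempty with rfl | ⟨v, hv⟩
    · exact ⟨∅, by simp, by simp, by simp⟩
    set S' := S.filter fun u => u ≠ v ∧ ¬ A u v
    have hS'S : S' ⊂ S := Finset.filter_ssubset.2 ⟨v, hv, by simp⟩
    have hS'mem : ∀ u ∈ S, u ∉ S' → u = v ∨ A u v := fun u hu hu' => by
      by_contra! h
      exact hu' (Finset.mem_filter.2 ⟨hu, h⟩)
    obtain ⟨K, hKS', hind, habs⟩ := ih S' hS'S
    by_cases hvK : ∃ q ∈ K, A v q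
    · obtain ⟨q, hqK, hvq⟩ := hvK
      refine ⟨K, hKS'.trans (Finset.coe_subset.2 hS'S.subset), hind, fun x hx hxK => ?_⟩
      by_cases hxS' : x ∈ S'
      · exact habs x hxS' hxK
      rcases hS'mem x hx hxS' with rfl | hxv
      · exact ⟨q, hqK, .of_adj hvq one_le_two⟩
      · exact ⟨q, hqK, .of_adj_of_adj hxv hvq le_rfl⟩
    · push Not at hvK
      have hKv : ∀ u ∈ K, ¬ A u v := fun u hu => (Finset.mem_filter.1 (hKS' hu)).2.2
      refine ⟨insert v K, Set.insert_subset hv (hKS'.trans (Finset.coe_subset.2 hS'S.subset)),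
        ?_, fun x hx hxK => ?_⟩
      · rintro x (rfl | hx) y (rfl | hy) hxy
        exacts [absurd rfl hxy, hvK y hy, hKv x hx, hind x hx y hy hxy]
      by_cases hxv : A x v
      · exact ⟨v, Set.mem_insert v K, .of_adj hxv one_le_two⟩
      have hxS' : x ∈ S' := Finset.mem_filter.2 ⟨hx, fun h => hxK (h ▸ Set.mem_insert x K), hxv⟩
      obtain ⟨y, hyK, hxy⟩ := habs x hxS' fun h => hxK (Set.mem_insert_of_mem v h)
      exact ⟨y, Set.mem_insert_of_mem v hyK, hxy⟩

namespace Semicomplete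

variable {V : Type*} {A : V → V → Prop}

/-- A vertex of maximum in-degree within `B`: were `z` not to reach it in two steps, every
in-neighbour of it in `B`, and the vertex itself, would be an in-neighbour of `z`. -/
theorem exists_mem_forall_kReach_two (hsemi : Semicomplete A) (hirr : Irreflexive A)
    (B : Finset V) (hB : B.Nonempty) :
    ∃ y ∈ B, ∀ z ∈ B, z ≠ y → KReach A 2 z y := by
  classical
  obtain ⟨y, hyB, hmax⟩ := B.exists_max_image (fun u => (B.filter (A · u)).card) hB
  refine ⟨y, hyB, fun z hzB hzy => ?_⟩
  by_contra hfar
  have hzy' : ¬ A z y := fun h => hfar (.of_adj h one_le_two)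
  have hyz : A y z := (hsemi z y hzy).resolve_left hzy'
  have hsub : insert y (B.filter (A · y)) ⊆ B.filter (A · z) := by
    intro w hw
    rcases Finset.mem_insert.1 hw with rfl | hw
    · exact Finset.mem_filter.2 ⟨hyB, hyz⟩
    obtain ⟨hwB, hwy⟩ := Finset.mem_filter.1 hw
    have hwz : w ≠ z := by rintro rfl; exact hzy' hwy
    have hzw : ¬ A z w := fun h => hfar (.of_adj_of_adj h hwy le_rfl)
    exact Finset.mem_filter.2 ⟨hwB, (hsemi w z hwz).resolve_right hzw⟩
  have hy : y ∉ B.filter (A · y) := fun h => hirr y (Finset.mem_filter.1 h).2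
  have hcard := Finset.card_le_card hsub
  rw [Finset.card_insert_of_notMem hy] at hcard
  have := hmax z hzB
  omega

theorem exists_ne_singletonAbsorbent [Fintype V] [Nonempty V] (hsemi : Semicomplete A)
    (hirr : Irreflexive A) (hnosink : ∀ x, ∃ y, A x y) :
    ∃ x y, x ≠ y ∧ SingletonAbsorbent A 2 x ∧ SingletonAbsorbent A 2 y := by
  classical
  obtain ⟨x, -, hx⟩ := hsemi.exists_mem_forall_kReach_two hirr Finset.univ Finset.univ_nonempty
  obtain ⟨j, hxj⟩ := hnosink x
  obtain ⟨y, hyB, hy⟩ := hsemi.exists_mem_forall_kReach_two hirr (Finset.univ.filter (A x ·))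
    ⟨j, Finset.mem_filter.2 ⟨Finset.mem_univ j, hxj⟩⟩
  have hxy : A x y := (Finset.mem_filter.1 hyB).2
  refine ⟨x, y, fun h => hirr x (h ▸ hxy), fun z hz => hx z (Finset.mem_univ z) hz,
    fun z hzy => ?_⟩
  by_cases hxz : A x z
  · exact hy z (Finset.mem_filter.2 ⟨Finset.mem_univ z, hxz⟩) hzy
  rcases eq_or_ne z x with rfl | hzx
  · exact .of_adj hxy one_le_two
  · exact .of_adj_of_adj ((hsemi z x hzx).resolve_right hxz) hxy le_rfl

end Semicomplete

namespace IsComposition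

variable {ι W : Type*} {AT : ι → ι → Prop} {AQ : W → W → Prop} {π : W → ι}

/-- Inner vertices of the lifted path are arbitrary preimages; irreflexivity of `T` puts
consecutive ones in different fibres. -/
theorem kReach_of_kReach_map (hcomp : IsComposition AT AQ π) (hirr : Irreflexive AT)
    {k : ℕ} {w w' : W} (hne : π w ≠ π w') (h : KReach AT k (π w) (π w')) :
    KReach AQ k w w' := by
  obtain ⟨n, hn, f, hf0, hfn, hf⟩ := h
  have hn0 : n ≠ 0 := by rintro rfl; exact hne (hf0.symm.trans hfn)
  set g : ℕ → W := fun j =>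
    if j = 0 then w else if j = n then w' else Function.surjInv hcomp.surj (f j)
  have hg : ∀ j, π (g j) = f j := by
    intro j
    simp only [g]
    split_ifs with h0 hjn
    · rw [h0, hf0]
    · rw [hjn, hfn]
    · exact Function.surjInv_eq hcomp.surj (f j)
  refine ⟨n, hn, g, if_pos rfl, by simp [g, hn0], fun j hj => ?_⟩
  have hA := hf j hj
  rw [← hg j, ← hg (j + 1)] at hA
  exact (hcomp.cross _ _ fun h => hirr _ (h ▸ hA)).2 hA

theorem exists_quasiKernel_subset_fiber [Fintype W] (hcomp : IsComposition AT AQ π)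
    (hirr : Irreflexive AT) {i : ι} (habs : SingletonAbsorbent AT 2 i) :
    ∃ K : Set W, QuasiKernel AQ K ∧ K ⊆ π ⁻¹' {i} := by
  classical
  obtain ⟨K, hKS, hind, habsK⟩ := exists_quasiKernel_subset AQ (Finset.univ.filter (π · = i))
  have hKfib : K ⊆ π ⁻¹' {i} := fun u hu => (Finset.mem_filter.1 (hKS hu)).2
  have hmem : ∀ {u}, π u = i → u ∈ Finset.univ.filter (π · = i) := fun hu =>
    Finset.mem_filter.2 ⟨Finset.mem_univ _, hu⟩
  obtain ⟨w₀, hw₀⟩ := hcomp.surj i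
  obtain ⟨y, hyK⟩ : K.Nonempty := by
    by_cases h : w₀ ∈ K
    · exact ⟨w₀, h⟩
    · obtain ⟨y, hy, -⟩ := habsK w₀ (hmem hw₀) h
      exact ⟨y, hy⟩
  have hyi : π y = i := hKfib hyK
  refine ⟨K, ⟨hind, fun w hw => ?_⟩, hKfib⟩
  by_cases hwi : π w = i
  · exact habsK w (hmem hwi) hw
  · exact ⟨y, hyK, hcomp.kReach_of_kReach_map hirr (hyi ▸ hwi) (hyi ▸ habs (π w) hwi)⟩

end IsComposition

theorem stmt16_general {ι W : Type*} [Fintype ι] [Fintype W]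
    (AT : ι → ι → Prop) (AQ : W → W → Prop) (π : W → ι)
    (hcard : 2 ≤ Fintype.card ι)
    (hTirr : Irreflexive AT)
    (hsemi : Semicomplete AT) (hcomp : IsComposition AT AQ π)
    (hnosink : ∀ i : ι, ∃ j : ι, AT i j) :
    ∃ K₁ K₂ : Set W, QuasiKernel AQ K₁ ∧ QuasiKernel AQ K₂ ∧ Disjoint K₁ K₂ := by
  have : Nonempty ι := Fintype.card_pos_iff.mp (by omega)
  obtain ⟨i, j, hij, hi, hj⟩ := hsemi.exists_ne_singletonAbsorbent hTirr hnosink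
  obtain ⟨K₁, hK₁, hK₁i⟩ := hcomp.exists_quasiKernel_subset_fiber hTirr hi
  obtain ⟨K₂, hK₂, hK₂j⟩ := hcomp.exists_quasiKernel_subset_fiber hTirr hj
  exact ⟨K₁, K₂, hK₁, hK₂,
    ((Set.disjoint_singleton.2 hij).preimage π).mono hK₁i hK₂j⟩

/-- A semicomplete composition whose outer digraph has no sink contains a pair of
disjoint quasi-kernels. -/
theorem stmt16 {ι W : Type*} [Fintype ι] [Fintype W]
    (AT : ι → ι → Prop) (AQ : W → W → Prop) (π : W → ι)
    (hcard : 2 ≤ Fintype.card ι)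
    (hTirr : Irreflexive AT) (hQirr : Irreflexive AQ)
    (hsemi : Semicomplete AT) (hcomp : IsComposition AT AQ π)
    (hnosink : ∀ i : ι, ∃ j : ι, AT i j) :
    ∃ K₁ K₂ : Set W, QuasiKernel AQ K₁ ∧ QuasiKernel AQ K₂ ∧ Disjoint K₁ K₂ :=
  stmt16_general AT AQ π hcard hTirr hsemi hcomp hnosink
end
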